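/- Let r ≥ 2, let G be a graph, and let h : H_r → G be a flat topological embedding of the hexagonal grid H_r into G. Then for every i with 2 ≤ i ≤ r, both the graph K_i and the graph I_i := K_i ∖ h(C_i) (obtained from K_i by deleting all vertices of h(C_i) and all edges incident with them) are connected planar graphs. -/

import Mathlib

lemma sym2_out_eq {α : Type} (s : Sym2 α) : s = s((Quot.out s).1, (Quot.out s).2) := by
  exact (Quot.out_eq s).symm

lemma sym2_out_fst_mem {α : Type} (s : Sym2 α) : (Quot.out s).1 ∈ s := by
  set p := Quot.out s with hp
  rw [sym2_out_eq s, ← hp]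
  exact Sym2.mem_mk_left _ _

lemma sym2_out_snd_mem {α : Type} (s : Sym2 α) : (Quot.out s).2 ∈ s := by
  set p := Quot.out s with hp
  rw [sym2_out_eq s, ← hp]
  exact Sym2.mem_mk_right _ _

lemma sym2_out_ne {α : Type} (s : Sym2 α) (h : ¬ s.IsDiag) : (Quot.out s).1 ≠ (Quot.out s).2 := by
  intro he
  exact h (by rw [sym2_out_eq s]; exact Sym2.mk_isDiag_iff.mpr he)

/-! ### Basic multigraphs -/

/-- A multigraph: undirected, loop-free, possibly with multiple (parallel) edges.
Each edge is assigned its unordered pair of (distinct) endpoints. -/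
structure MGraph where
  V : Type
  E : Type
  ends : E → Sym2 V
  loopless : ∀ e : E, ¬ (ends e).IsDiag

namespace MGraph

/-- Walks in a multigraph. -/
inductive Walk (G : MGraph) : G.V → G.V → Type where
  | nil (v : G.V) : Walk G v v
  | cons {u v w : G.V} (e : G.E) (he : G.ends e = s(u, v)) (p : Walk G v w) : Walk G u w

namespace Walk

variable {G : MGraph}

/-- The list of vertices visited by a walk (in order, including both endpoints). -/
def support : ∀ {u v : G.V}, G.Walk u v → List G.V
  | u, _, .nil _ => [u]
  | u, _, .cons _ _ p => u :: p.support

/-- The list of edges traversed by a walk. -/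
def edgeList : ∀ {u v : G.V}, G.Walk u v → List G.E
  | _, _, .nil _ => []
  | _, _, .cons e _ p => e :: p.edgeList

lemma start_mem_support : ∀ {u v : G.V} (w : G.Walk u v), u ∈ w.support
  | _, _, .nil _ => List.mem_singleton_self _
  | _, _, .cons _ _ _ => List.mem_cons_self

lemma end_mem_support : ∀ {u v : G.V} (w : G.Walk u v), v ∈ w.support
  | _, _, .nil _ => List.mem_singleton_self _
  | _, _, .cons _ _ p => List.mem_cons_of_mem _ (end_mem_support p)

lemma mem_support_of_mem_edgeList :
    ∀ {u v : G.V} (w : G.Walk u v) (f : G.E) (x : G.V),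
      f ∈ w.edgeList → x ∈ G.ends f → x ∈ w.support
  | _, _, .nil _, f, x, hf, _ => by simp [edgeList] at hf
  | u, v, .cons e he p, f, x, hf, hx => by
      rcases List.mem_cons.mp hf with h | h
      · subst h
        rw [he, Sym2.mem_iff] at hx
        rcases hx with rfl | rfl
        · exact start_mem_support _
        · exact List.mem_cons_of_mem _ (start_mem_support p)
      · exact List.mem_cons_of_mem _ (mem_support_of_mem_edgeList p f x h hx)

/-- A walk is a path if it visits no vertex twice. -/
def IsPath {u v : G.V} (w : G.Walk u v) : Prop := w.support.Nodup

/-- A closed walk is a cycle if it is nontrivial, repeats no edge,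
and repeats no vertex except the first = last one. -/
def IsCycleW {u : G.V} (w : G.Walk u u) : Prop :=
  w.edgeList ≠ [] ∧ w.edgeList.Nodup ∧ w.support.tail.Nodup

end Walk

/-! ### Subgraphs -/

/-- A subgraph of `G`, given by a set of vertices and a set of edges all of whose
endpoints belong to the vertex set. -/
structure Subgraph (G : MGraph) where
  verts : Set G.V
  edges : Set G.E
  closed : ∀ e ∈ edges, ∀ v ∈ G.ends e, v ∈ verts

namespace Subgraph

variable {G : MGraph}

/-- The subgraph consisting of all of `G`. -/
def top (G : MGraph) : G.Subgraph where
  verts := Set.univ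
  edges := Set.univ
  closed := fun _ _ _ _ => Set.mem_univ _

/-- Union of two subgraphs. -/
def union (A B : G.Subgraph) : G.Subgraph where
  verts := A.verts ∪ B.verts
  edges := A.edges ∪ B.edges
  closed := by
    rintro e (he | he) v hv
    · exact Or.inl (A.closed e he v hv)
    · exact Or.inr (B.closed e he v hv)

/-- Union of a set of subgraphs. -/
def sUnion (𝒮 : Set G.Subgraph) : G.Subgraph where
  verts := ⋃ S ∈ 𝒮, S.verts
  edges := ⋃ S ∈ 𝒮, S.edges
  closed := by
    intro e he v hv
    simp only [Set.mem_iUnion] at he ⊢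
    obtain ⟨S, hS, heS⟩ := he
    exact ⟨S, hS, S.closed e heS v hv⟩

/-- Delete a set of vertices (and all edges touching them) from a subgraph. -/
def delete (S : G.Subgraph) (A : Set G.V) : G.Subgraph where
  verts := S.verts \ A
  edges := {e ∈ S.edges | ∀ v ∈ G.ends e, v ∉ A}
  closed := fun e he v hv => ⟨S.closed e he.1 v hv, he.2 v hv⟩

/-- The subgraph, viewed as a graph in its own right. -/
def toGraph (S : G.Subgraph) : MGraph where
  V := {v : G.V // v ∈ S.verts}
  E := {e : G.E // e ∈ S.edges}
  ends := fun e => (G.ends e.val).attachWith (fun v hv => S.closed e.val e.2 v hv)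
  loopless := by
    intro e he
    have h2 := Sym2.IsDiag.map (f := Subtype.val) he
    rw [Sym2.attachWith_map_subtypeVal] at h2
    exact G.loopless e.val h2

lemma toGraph_ends {S : G.Subgraph} (e : S.toGraph.E) {v w : G.V}
    (hvw : G.ends e.val = s(v, w)) (hv : v ∈ S.verts) (hw : w ∈ S.verts) :
    S.toGraph.ends e = s((⟨v, hv⟩ : {v : G.V // v ∈ S.verts}), ⟨w, hw⟩) := by
  apply Sym2.map.injective Subtype.val_injective
  show Sym2.map Subtype.val ((G.ends e.val).attachWith _) = _
  rw [Sym2.attachWith_map_subtypeVal, Sym2.map_pair_eq, hvw]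

lemma toGraph_mem_ends {S : G.Subgraph} (e : S.toGraph.E) (x : S.toGraph.V) :
    x ∈ S.toGraph.ends e ↔ x.val ∈ G.ends e.val := by
  constructor
  · intro hx
    have h2 : x.val ∈ Sym2.map Subtype.val (S.toGraph.ends e) :=
      Sym2.mem_map.mpr ⟨x, hx, rfl⟩
    rwa [show Sym2.map Subtype.val (S.toGraph.ends e) = G.ends e.val from
      Sym2.attachWith_map_subtypeVal _] at h2
  · intro hx
    have h2 : x.val ∈ Sym2.map Subtype.val (S.toGraph.ends e) := by
      rwa [show Sym2.map Subtype.val (S.toGraph.ends e) = G.ends e.val from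
        Sym2.attachWith_map_subtypeVal _]
    obtain ⟨y, hy, hyx⟩ := Sym2.mem_map.mp h2
    rwa [show y = x from Subtype.ext hyx] at hy

/-- Reachability within a subgraph: a walk of `G` all of whose vertices and
edges belong to the subgraph. -/
def Reach (S : G.Subgraph) (u v : G.V) : Prop :=
  ∃ w : G.Walk u v, (∀ x ∈ w.support, x ∈ S.verts) ∧ ∀ e ∈ w.edgeList, e ∈ S.edges

/-- A subgraph is connected if it is nonempty and any two of its vertices are
joined by a walk inside it. -/
def Connected (S : G.Subgraph) : Prop :=
  S.verts.Nonempty ∧ ∀ u ∈ S.verts, ∀ v ∈ S.verts, S.Reach u v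

end Subgraph

/-- The induced subgraph on a vertex set `A`. -/
def induce (G : MGraph) (A : Set G.V) : G.Subgraph where
  verts := A
  edges := {e | ∀ v ∈ G.ends e, v ∈ A}
  closed := fun _ he v hv => he v hv

/-- `G ∖ A`: delete the vertices in `A`, keeping only edges with no endpoint in `A`. -/
def deleteVerts (G : MGraph) (A : Set G.V) : G.Subgraph :=
  G.induce Aᶜ

end MGraph
/-! ### Drawings in the plane -/

/-- A drawing of a graph in the plane.  Every vertex is assigned a point and every
edge a simple curve (given by an injective continuous parametrization on `[0,1]`)
joining the images of its endpoints; distinct vertices get distinct points;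
distinct edge curves meet in at most one interior point; no curve passes through the
image of a vertex other than its endpoints; and no point which is not the image of a
vertex lies on more than two edge curves. -/
structure Drawing (G : MGraph) where
  vpos : G.V → ℝ × ℝ
  par : G.E → ℝ → ℝ × ℝ
  par_cont : ∀ e, ContinuousOn (par e) (Set.Icc 0 1)
  par_inj : ∀ e, Set.InjOn (par e) (Set.Icc 0 1)
  ends_match : ∀ e, ∃ v w : G.V, G.ends e = s(v, w) ∧ par e 0 = vpos v ∧ par e 1 = vpos w
  vpos_inj : Function.Injective vpos
  arcs_inter : ∀ e f : G.E, e ≠ f →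
    Set.Subsingleton (par e '' Set.Ioo 0 1 ∩ par f '' Set.Ioo 0 1)
  vertex_on_arc : ∀ (e : G.E) (v : G.V), vpos v ∈ par e '' Set.Icc 0 1 → v ∈ G.ends e
  at_most_two : ∀ x : ℝ × ℝ, x ∉ Set.range vpos →
    ∀ e₁ e₂ e₃ : G.E, x ∈ par e₁ '' Set.Icc 0 1 → x ∈ par e₂ '' Set.Icc 0 1 →
      x ∈ par e₃ '' Set.Icc 0 1 → e₁ = e₂ ∨ e₁ = e₃ ∨ e₂ = e₃

namespace Drawing

variable {G : MGraph}

/-- The curve drawn for the edge `e`. -/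
def arc (Δ : Drawing G) (e : G.E) : Set (ℝ × ℝ) := Δ.par e '' Set.Icc 0 1

/-- A crossing of a drawing: a point which is not the image of a vertex and lies on
two distinct edge curves. -/
def IsCrossing (Δ : Drawing G) (x : ℝ × ℝ) : Prop :=
  x ∉ Set.range Δ.vpos ∧ ∃ e f : G.E, e ≠ f ∧ x ∈ Δ.arc e ∧ x ∈ Δ.arc f

/-- The set of crossings of a drawing. -/
def crossings (Δ : Drawing G) : Set (ℝ × ℝ) := {x | Δ.IsCrossing x}

/-- The drawing has at most `k` crossings. -/
def CrossingsAtMost (Δ : Drawing G) (k : ℕ) : Prop :=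
  Δ.crossings.Finite ∧ Δ.crossings.ncard ≤ k

/-- The edge `e` is involved in some crossing of the drawing. -/
def Involved (Δ : Drawing G) (e : G.E) : Prop :=
  ∃ x : ℝ × ℝ, Δ.IsCrossing x ∧ x ∈ Δ.arc e

/-- An `l`-good drawing with respect to a set `F` of forbidden edges:
at most `l` crossings, and no forbidden edge is involved in any crossing. -/
def IsGood (Δ : Drawing G) (l : ℕ) (F : Set G.E) : Prop :=
  Δ.CrossingsAtMost l ∧ ∀ e ∈ F, ¬ Δ.Involved e

/-- The image of a subgraph under a drawing: all vertex points and edge curves of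
the subgraph. -/
def subImage (Δ : Drawing G) (S : G.Subgraph) : Set (ℝ × ℝ) :=
  Δ.vpos '' S.verts ∪ ⋃ e ∈ S.edges, Δ.arc e

/-- The restriction of a drawing to a subgraph. -/
def restrict (Δ : Drawing G) (S : G.Subgraph) : Drawing S.toGraph where
  vpos := fun v => Δ.vpos v.val
  par := fun e => Δ.par e.val
  par_cont := fun e => Δ.par_cont e.val
  par_inj := fun e => Δ.par_inj e.val
  ends_match := by
    intro e
    obtain ⟨v, w, hvw, h0, h1⟩ := Δ.ends_match e.val
    have hv : v ∈ S.verts := S.closed e.val e.2 v (by rw [hvw]; exact Sym2.mem_mk_left _ _)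
    have hw : w ∈ S.verts := S.closed e.val e.2 w (by rw [hvw]; exact Sym2.mem_mk_right _ _)
    exact ⟨⟨v, hv⟩, ⟨w, hw⟩, MGraph.Subgraph.toGraph_ends e hvw hv hw, h0, h1⟩
  vpos_inj := fun v w h => Subtype.ext (Δ.vpos_inj h)
  arcs_inter := fun e f hef =>
    Δ.arcs_inter e.val f.val (fun h => hef (Subtype.ext h))
  vertex_on_arc := by
    intro e v hv
    exact (MGraph.Subgraph.toGraph_mem_ends e v).mpr (Δ.vertex_on_arc e.val v.val hv)
  at_most_two := by
    intro x hx e₁ e₂ e₃ h₁ h₂ h₃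
    by_cases hxr : x ∈ Set.range Δ.vpos
    · obtain ⟨u, hu⟩ := hxr
      have hu1 : u ∈ G.ends e₁.val := Δ.vertex_on_arc e₁.val u (by rw [hu]; exact h₁)
      have huS : u ∈ S.verts := S.closed e₁.val e₁.2 u hu1
      exact absurd ⟨⟨u, huS⟩, hu⟩ hx
    · rcases Δ.at_most_two x hxr e₁.val e₂.val e₃.val h₁ h₂ h₃ with h | h | h
      · exact Or.inl (Subtype.ext h)
      · exact Or.inr (Or.inl (Subtype.ext h))
      · exact Or.inr (Or.inr (Subtype.ext h))

end Drawing

namespace MGraph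

/-- A graph is planar if it has a drawing without crossings. -/
def IsPlanar (G : MGraph) : Prop := ∃ Δ : Drawing G, Δ.crossings = ∅

/-- The crossing number of `G` is at most `k`. -/
def CrossingNumberLE (G : MGraph) (k : ℕ) : Prop :=
  ∃ Δ : Drawing G, Δ.CrossingsAtMost k

end MGraph

/-- A simple closed curve in the plane: a continuous injective image of a circle. -/
def IsSimpleClosedCurve (s : Set (ℝ × ℝ)) : Prop :=
  ∃ f : AddCircle (1 : ℝ) → ℝ × ℝ, Continuous f ∧ Function.Injective f ∧ Set.range f = s
/-! ### H-components -/

namespace MGraph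

variable {G : MGraph}

/-- The subgraph consisting of a single edge together with its endpoints. -/
def edgeComp (G : MGraph) (e : G.E) : G.Subgraph where
  verts := {v | v ∈ G.ends e}
  edges := {e}
  closed := by
    rintro f rfl v hv
    exact hv

/-- For a subgraph `H` of `G` and a vertex `u ∉ H`, the `H`-component of `G`
determined by `u`: the connected component of `G ∖ H` containing `u`, together with
all edges joining it to `H` and their endpoints in `H`. -/
def attachComp (G : MGraph) (H : G.Subgraph) (u : G.V) : G.Subgraph where
  verts := {v | (G.deleteVerts H.verts).Reach u v} ∪
    {v | v ∈ H.verts ∧ ∃ (e : G.E) (w : G.V), G.ends e = s(w, v) ∧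
      (G.deleteVerts H.verts).Reach u w}
  edges := {e | e ∈ (G.deleteVerts H.verts).edges ∧
      ∀ v ∈ G.ends e, (G.deleteVerts H.verts).Reach u v} ∪
    {e | ∃ (w v : G.V), G.ends e = s(w, v) ∧ (G.deleteVerts H.verts).Reach u w ∧
      v ∈ H.verts}
  closed := by
    rintro e (⟨-, he⟩ | ⟨w, v, hwv, hw, hv⟩) x hx
    · exact Or.inl (he x hx)
    · rw [hwv, Sym2.mem_iff] at hx
      rcases hx with rfl | rfl
      · exact Or.inl hw
      · exact Or.inr ⟨hv, e, w, hwv, hw⟩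

/-- `C` is an `H`-component of `G`: either a connected component of `G ∖ H` together
with the edges joining it to `H` and their endpoints in `H`, or a single edge of
`G` outside `H` with both endpoints in `H`, together with its endpoints. -/
def IsHComp (G : MGraph) (H C : G.Subgraph) : Prop :=
  (∃ u : G.V, u ∉ H.verts ∧ C = G.attachComp H u) ∨
  (∃ e : G.E, e ∉ H.edges ∧ (∀ v ∈ G.ends e, v ∈ H.verts) ∧ C = G.edgeComp e)

/-! ### Graph embeddings (subgraph copies) -/

/-- An embedding of the graph `H` into the graph `G`: injective maps on vertices and
edges that respect endpoints.  The image is a subgraph of `G` isomorphic to `H`. -/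
structure Emb (H G : MGraph) where
  vmap : H.V → G.V
  emap : H.E → G.E
  vmap_inj : Function.Injective vmap
  emap_inj : Function.Injective emap
  ends_map : ∀ e : H.E, G.ends (emap e) = (H.ends e).map vmap

end MGraph

/-! ### Topological embeddings -/

/-- A topological embedding of `H` into `G`: an injective map on vertices together
with, for every edge `e` of `H`, a path in `G` (recorded by its vertex set
`pVerts e` and edge set `pEdges e`) joining the images of the endpoints of `e` and
avoiding the images of all other vertices, such that the paths of distinct edges are
internally disjoint. -/
structure TopEmb (H G : MGraph) where
  vmap : H.V → G.V
  vmap_inj : Function.Injective vmap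
  pVerts : H.E → Set G.V
  pEdges : H.E → Set G.E
  is_path : ∀ e : H.E, ∃ (a b : H.V) (w : G.Walk (vmap a) (vmap b)),
    H.ends e = s(a, b) ∧ w.IsPath ∧
    pVerts e = {x | x ∈ w.support} ∧ pEdges e = {f | f ∈ w.edgeList} ∧
    ∀ u : H.V, u ∉ H.ends e → vmap u ∉ w.support
  int_disjoint : ∀ e f : H.E, e ≠ f → ∀ x ∈ pVerts e ∩ pVerts f,
    ∃ a : H.V, a ∈ H.ends e ∧ a ∈ H.ends f ∧ x = vmap a
  edge_disjoint : ∀ e f : H.E, e ≠ f → pEdges e ∩ pEdges f = ∅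

namespace TopEmb

variable {H G : MGraph}

/-- The image `h(S)` of a subgraph `S ⊆ H` under a topological embedding `h`. -/
def imageOf (h : TopEmb H G) (S : H.Subgraph) : G.Subgraph where
  verts := (h.vmap '' S.verts) ∪ ⋃ e ∈ S.edges, h.pVerts e
  edges := ⋃ e ∈ S.edges, h.pEdges e
  closed := by
    intro f hf v hv
    simp only [Set.mem_iUnion] at hf
    obtain ⟨e, he, hfe⟩ := hf
    obtain ⟨a, b, w, -, -, hV, hE, -⟩ := h.is_path e
    right
    simp only [Set.mem_iUnion]
    refine ⟨e, he, ?_⟩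
    rw [hV]
    rw [hE] at hfe
    exact MGraph.Walk.mem_support_of_mem_edgeList w f v hfe hv

/-- The image `h(H)` of a topological embedding. -/
def image (h : TopEmb H G) : G.Subgraph := h.imageOf (MGraph.Subgraph.top H)

end TopEmb
/-! ### Hexagonal grids -/

/-- The vertex type of the hexagonal grid of radius `r`: the vertices are arranged on
`r` concentric principal cycles, the `i`-th of which (counting from the inside,
starting at `i = 0`) has `6 * (2 * i + 1)` vertices. -/
abbrev HexV (r : ℕ) : Type := (i : Fin r) × ZMod (6 * (2 * i.val + 1))

/-- The endpoint on the `i`-th principal cycle of the `k`-th spoke joining the `i`-th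
and the `(i+1)`-st principal cycle. -/
def spokeOutV (r : ℕ) (i : Fin (r - 1)) (k : ℕ) : HexV r :=
  ⟨⟨i.val, by have := i.isLt; omega⟩,
    ((k / (i.val + 1)) * (2 * i.val + 1) + 2 * (k % (i.val + 1)) : ℕ)⟩

/-- The endpoint on the `(i+1)`-st principal cycle of the `k`-th spoke joining the
`i`-th and the `(i+1)`-st principal cycle. -/
def spokeInV (r : ℕ) (i : Fin (r - 1)) (k : ℕ) : HexV r :=
  ⟨⟨i.val + 1, by have := i.isLt; omega⟩,
    ((k / (i.val + 1)) * (2 * (i.val + 1) + 1) + 2 * (k % (i.val + 1)) + 1 : ℕ)⟩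

/-- The hexagonal grid of radius `r` (`r` concentric cycles of hexagons): its vertices
lie on `r` principal cycles, the `i`-th principal cycle (0-indexed) having
`6 * (2 * i + 1)` vertices and being joined to the next one by `6 * (i + 1)` spokes
attached alternatingly. -/
def hexGrid (r : ℕ) : MGraph where
  V := HexV r
  E := ((i : Fin r) × ZMod (6 * (2 * i.val + 1))) ⊕ ((i : Fin (r - 1)) × ZMod (6 * (i.val + 1)))
  ends := fun e => match e with
    | .inl ⟨i, j⟩ => s((⟨i, j⟩ : HexV r), ⟨i, j + 1⟩)
    | .inr ⟨i, k⟩ => s(spokeOutV r i k.val, spokeInV r i k.val)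
  loopless := by
    rintro (⟨i, j⟩ | ⟨i, k⟩) h
    · rw [Sym2.mk_isDiag_iff] at h
      have hj : j = j + 1 := eq_of_heq (Sigma.ext_iff.mp h).2
      have h1 : (1 : ZMod (6 * (2 * i.val + 1))) = 0 := left_eq_add.mp hj
      haveI : Fact (1 < 6 * (2 * i.val + 1)) := ⟨by omega⟩
      exact one_ne_zero h1
    · rw [Sym2.mk_isDiag_iff] at h
      have := congrArg (fun v : HexV r => v.1.val) h
      simp [spokeOutV, spokeInV] at this

@[simp] lemma hexGrid_ends_inl (r : ℕ) (i : Fin r) (j : ZMod (6 * (2 * i.val + 1))) :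
    (hexGrid r).ends (Sum.inl ⟨i, j⟩) = s((⟨i, j⟩ : HexV r), ⟨i, j + 1⟩) := rfl

@[simp] lemma hexGrid_ends_inr (r : ℕ) (i : Fin (r - 1)) (k : ZMod (6 * (i.val + 1))) :
    (hexGrid r).ends (Sum.inr ⟨i, k⟩) = s(spokeOutV r i k.val, spokeInV r i k.val) := rfl

/-- The `i`-th principal cycle of the hexagonal grid of radius `r` (`i` is 0-indexed,
so `i = ⟨0, _⟩` is the innermost principal cycle `C_1` of the paper and
`i = ⟨r-1, _⟩` the outermost one `C_r`). -/
def principalCycle (r : ℕ) (i : Fin r) : (hexGrid r).Subgraph where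
  verts := {v | v.1 = i}
  edges := {e | ∃ j, e = Sum.inl ⟨i, j⟩}
  closed := by
    rintro e ⟨j, rfl⟩ v hv
    have hv' : v = ⟨i, j⟩ ∨ v = ⟨i, j + 1⟩ := Sym2.mem_iff.mp hv
    rcases hv' with rfl | rfl <;> rfl

/-- The subgrid `H^i` of the hexagonal grid bounded by the `i`-th principal cycle:
the induced subgraph on the vertices of the principal cycles `C_1, …, C_i`. -/
def hexSubgridLE (r : ℕ) (i : Fin r) : (hexGrid r).Subgraph :=
  (hexGrid r).induce {v | v.1 ≤ i}

/-- The subgrid `H^i ∖ C_i` of the hexagonal grid: everything strictly inside the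
`i`-th principal cycle. -/
def hexSubgridLT (r : ℕ) (i : Fin r) : (hexGrid r).Subgraph :=
  (hexGrid r).induce {v | v.1 < i}

namespace TopEmb

variable {G : MGraph} {r : ℕ}

/-- An attachment of a topological embedding `h : H_r → G`: an `h(H_r)`-component of
`G` that intersects the interior `h(H_r ∖ C_r)` of `h(H_r)`. -/
def IsAttachment (h : TopEmb (hexGrid r) G) (C : G.Subgraph) : Prop :=
  G.IsHComp h.image C ∧
  (C.verts ∩ (h.imageOf ((hexGrid r).deleteVerts {v | v.1.val = r - 1})).verts).Nonempty

/-- A topological embedding `h : H_r → G` is flat if the union of `h(H_r)` with all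
its attachments is planar. -/
def Flat (h : TopEmb (hexGrid r) G) : Prop :=
  ((h.image.union (MGraph.Subgraph.sUnion {C | h.IsAttachment C})).toGraph).IsPlanar

/-- The subgraph `K_i` of `G`: the image `h(H^i)` together with all attachments of
`h(H_r)` that intersect the interior `h(H^i ∖ C_i)`. -/
def K (h : TopEmb (hexGrid r) G) (i : Fin r) : G.Subgraph :=
  (h.imageOf (hexSubgridLE r i)).union
    (MGraph.Subgraph.sUnion {C | h.IsAttachment C ∧
      (C.verts ∩ (h.imageOf (hexSubgridLT r i)).verts).Nonempty})

/-- The edge set `F_i`: all edges of `K_i` having at least one endpoint on `h(C_i)`. -/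
def Fset (h : TopEmb (hexGrid r) G) (i : Fin r) : Set G.E :=
  {e | e ∈ (h.K i).edges ∧ ∃ v ∈ G.ends e, v ∈ (h.imageOf (principalCycle r i)).verts}

/-- The subgraph `I_i = K_i ∖ h(C_i)`: delete from `K_i` all vertices of `h(C_i)` and
all edges incident with them. -/
def Iset (h : TopEmb (hexGrid r) G) (i : Fin r) : G.Subgraph :=
  (h.K i).delete (h.imageOf (principalCycle r i)).verts

end TopEmb
/-! ### Graph constructions -/

namespace MGraph

open Classical in
/-- The graph obtained from `G` by contracting the (induced) subgraph on a vertex set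
`A` to a single new vertex: all vertices of `A` and all edges with both endpoints in
`A` are deleted, a new vertex (the vertex `Sum.inr ()`) is added, and every edge with
exactly one endpoint in `A` now joins its other endpoint to the new vertex. -/
noncomputable def contract (G : MGraph) (A : Set G.V) : MGraph where
  V := {v : G.V // v ∉ A} ⊕ Unit
  E := {e : G.E // ∃ v ∈ G.ends e, v ∉ A}
  ends := fun e => (G.ends e.val).map
    (fun v => if h : v ∈ A then Sum.inr () else Sum.inl ⟨v, h⟩)
  loopless := by
    intro e he
    try dsimp only at he
    obtain ⟨v, hv, hvA⟩ := e.2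
    obtain ⟨⟨a, b⟩, hab⟩ := Quot.exists_rep (G.ends e.val)
    have hab' : G.ends e.val = s(a, b) := hab.symm
    have hne : a ≠ b := fun hh => G.loopless e.val (by rw [hab']; exact Sym2.mk_isDiag_iff.mpr hh)
    rw [hab'] at he hv
    rw [Sym2.map_pair_eq, Sym2.mk_isDiag_iff] at he
    rw [Sym2.mem_iff] at hv
    by_cases ha : a ∈ A <;> by_cases hb : b ∈ A
    · rcases hv with rfl | rfl <;> exact hvA (by assumption)
    · rw [dif_pos ha, dif_neg hb] at he; exact absurd he (by simp)
    · rw [dif_neg ha, dif_pos hb] at he; exact absurd he (by simp)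
    · rw [dif_neg ha, dif_neg hb] at he
      exact hne (congrArg Subtype.val (Sum.inl_injective he))

/-- The graph `G^{e₁ × e₂}` obtained from `G` by crossing the two distinct edges
`e₁` and `e₂`: delete `e₁` and `e₂`, add a new vertex (the vertex `Sum.inr ()`), and
add four new edges joining the new vertex to the two endpoints of `e₁` and to the two
endpoints of `e₂`. -/
def crossAt (G : MGraph) (e₁ e₂ : G.E) : MGraph where
  V := G.V ⊕ Unit
  E := {e : G.E // e ≠ e₁ ∧ e ≠ e₂} ⊕
    {p : Fin 2 × G.V // p.2 ∈ G.ends (if p.1 = 0 then e₁ else e₂)}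
  ends := fun f => match f with
    | .inl g => (G.ends g.val).map Sum.inl
    | .inr p => s(Sum.inl p.val.2, Sum.inr ())
  loopless := by
    rintro (g | p) h
    · exact G.loopless g.val ((Sym2.isDiag_map Sum.inl_injective).mp h)
    · rw [Sym2.mk_isDiag_iff] at h
      exact absurd h (by simp)

/-- A set `F` of edges of `G`, viewed as a set of edges of `G^{e₁ × e₂}` (only
meaningful when `e₁, e₂ ∉ F`). -/
def liftF (G : MGraph) (e₁ e₂ : G.E) (F : Set G.E) : Set (G.crossAt e₁ e₂).E :=
  {f | ∃ g : {e : G.E // e ≠ e₁ ∧ e ≠ e₂}, f = Sum.inl g ∧ g.val ∈ F}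

/-- The `j`-th vertex (for `0 ≤ j ≤ k`) on the path of length `k` replacing the
edge `e` in the subdivision of `G` in which every edge is subdivided `k - 1` times. -/
noncomputable def subdivVert (G : MGraph) (k : ℕ) (e : G.E) (j : ℕ) : G.V ⊕ (G.E × Fin (k - 1)) :=
  if h0 : j = 0 then Sum.inl (Quot.out (G.ends e)).1
  else if h : j < k then Sum.inr (e, ⟨j - 1, by omega⟩)
  else Sum.inl (Quot.out (G.ends e)).2

/-- The graph `G̃` obtained from `G` by subdividing every edge `k - 1` times, that
is, replacing every edge by a path of length `k` (for `k ≥ 1`). -/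
noncomputable def subdivide (G : MGraph) (k : ℕ) : MGraph where
  V := G.V ⊕ (G.E × Fin (k - 1))
  E := G.E × Fin k
  ends := fun p => s(G.subdivVert k p.1 p.2.val, G.subdivVert k p.1 (p.2.val + 1))
  loopless := by
    rintro ⟨e, j⟩ h
    dsimp only at h
    rw [Sym2.mk_isDiag_iff] at h
    have hj : j.val < k := j.isLt
    unfold subdivVert at h
    by_cases h0 : j.val = 0
    · rw [dif_pos h0] at h
      by_cases h1 : j.val + 1 < k
      · rw [dif_neg (by omega), dif_pos h1] at h
        exact absurd h (by simp)
      · rw [dif_neg (by omega), dif_neg (by omega)] at h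
        exact sym2_out_ne _ (G.loopless e) (Sum.inl_injective h)
    · rw [dif_neg h0, dif_pos hj] at h
      by_cases h1 : j.val + 1 < k
      · rw [dif_neg (by omega), dif_pos h1] at h
        have h3 := Sum.inr_injective h
        rw [Prod.mk.injEq] at h3
        have h2 : j.val - 1 = j.val + 1 - 1 := congrArg Fin.val h3.2
        omega
      · rw [dif_neg (by omega), dif_neg (by omega)] at h
        exact absurd h (by simp)

/-- The set of edges of the subdivision `G̃` of `G` arising from the subdivision of
an edge in `F`. -/
def subdivF (G : MGraph) (k : ℕ) (F : Set G.E) : Set (G.subdivide k).E :=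
  {p | p.1 ∈ F}

/-- The graph `G^{×ē}` obtained from `G` by successively crossing `e 0` with `e 1`,
`e 2` with `e 3`, …, `e (2l-2)` with `e (2l-1)` (for pairwise distinct edges
`e 0, …, e (2l-1)`): the crossed edges are deleted, `l` new vertices are added (one
for each pair), and each new vertex is joined by four new edges to the endpoints of
the two edges of its pair. -/
def multiCross (G : MGraph) (l : ℕ) (e : Fin (2 * l) → G.E) : MGraph where
  V := G.V ⊕ Fin l
  E := {f : G.E // ∀ i, f ≠ e i} ⊕ {p : Fin (2 * l) × G.V // p.2 ∈ G.ends (e p.1)}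
  ends := fun f => match f with
    | .inl g => (G.ends g.val).map Sum.inl
    | .inr p => s(Sum.inl p.val.2,
        (Sum.inr ⟨p.val.1.val / 2, by have := p.val.1.isLt; omega⟩ : G.V ⊕ Fin l))
  loopless := by
    rintro (g | p) h
    · exact G.loopless g.val ((Sym2.isDiag_map Sum.inl_injective).mp h)
    · rw [Sym2.mk_isDiag_iff] at h
      exact absurd h (by simp)

end MGraph

/-!
`K_i` and `I_i` are subgraphs of the union of `h(H_r)` with its attachments, which is planar by
flatness, and planarity passes to subgraphs by restricting a drawing. For connectivity, `h(H^i)`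
and `h(H^i ∖ C_i) = h(H^{i-1})` are connected as images of connected subgrids. An `h(H_r)`-component
stays connected after deleting any set of vertices of `h(H_r)`, and every attachment in `K_i` meets
`h(H^i ∖ C_i)`. Finally, a vertex of `h(H^i)` off `h(C_i)` lies on the path of an edge of `H^i`
that has an end `b` strictly inside `C_i`, and follows that path to `h(b)` without meeting `h(C_i)`.
-/

namespace MGraph

variable {G : MGraph}

namespace Walk

lemma exists_suffix_of_mem_support {u v x : G.V} :
    ∀ (w : G.Walk u v), w.IsPath → x ∈ w.support →
      ∃ w' : G.Walk x v, w'.support ⊆ w.support ∧ w'.edgeList ⊆ w.edgeList ∧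
        (u ∈ w'.support → x = u)
  | .nil _, _, hx => by
      obtain rfl := List.mem_singleton.mp hx
      exact ⟨.nil _, List.Subset.refl _, List.Subset.refl _, fun _ => rfl⟩
  | .cons e he p, hw, hx => by
      rw [IsPath, support, List.nodup_cons] at hw
      rcases List.mem_cons.mp hx with rfl | hx
      · exact ⟨.cons e he p, List.Subset.refl _, List.Subset.refl _, fun _ => rfl⟩
      · obtain ⟨w', hV, hE, -⟩ := exists_suffix_of_mem_support p hw.2 hx
        exact ⟨w', List.subset_cons_of_subset _ hV, List.subset_cons_of_subset _ hE,
          fun hu => absurd (hV hu) hw.1⟩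

lemma exists_prefix_of_mem_support {u v x : G.V} :
    ∀ (w : G.Walk u v), w.IsPath → x ∈ w.support →
      ∃ w' : G.Walk u x, w'.support ⊆ w.support ∧ w'.edgeList ⊆ w.edgeList ∧
        (v ∈ w'.support → x = v)
  | .nil _, _, hx => by
      obtain rfl := List.mem_singleton.mp hx
      exact ⟨.nil _, List.Subset.refl _, List.Subset.refl _, fun _ => rfl⟩
  | .cons e he p, hw, hx => by
      rw [IsPath, support, List.nodup_cons] at hw
      rcases List.mem_cons.mp hx with rfl | hx
      · refine ⟨.nil _, by simp [support], by simp [edgeList], fun hv => ?_⟩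
        exact absurd (List.mem_singleton.mp hv ▸ p.end_mem_support) hw.1
      · obtain ⟨w', hV, hE, hv⟩ := exists_prefix_of_mem_support p hw.2 hx
        refine ⟨.cons e he w', List.cons_subset_cons _ hV, List.cons_subset_cons _ hE, ?_⟩
        intro hv'
        rcases List.mem_cons.mp hv' with rfl | hv'
        · exact absurd p.end_mem_support hw.1
        · exact hv hv'

end Walk

namespace Subgraph

instance : Preorder G.Subgraph where
  le S T := S.verts ⊆ T.verts ∧ S.edges ⊆ T.edges
  le_refl _ := ⟨subset_rfl, subset_rfl⟩
  le_trans _ _ _ h₁ h₂ := ⟨h₁.1.trans h₂.1, h₁.2.trans h₂.2⟩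

variable {S T : G.Subgraph} {𝒮 𝒯 : Set G.Subgraph} {A : Set G.V}

lemma le_union_left : S ≤ S.union T := ⟨Set.subset_union_left, Set.subset_union_left⟩

lemma le_union_right : T ≤ S.union T := ⟨Set.subset_union_right, Set.subset_union_right⟩

lemma union_mono {S' T' : G.Subgraph} (hS : S ≤ S') (hT : T ≤ T') : S.union T ≤ S'.union T' :=
  ⟨Set.union_subset_union hS.1 hT.1, Set.union_subset_union hS.2 hT.2⟩

lemma mem_sUnion_verts {x : G.V} : x ∈ (sUnion 𝒮).verts ↔ ∃ S ∈ 𝒮, x ∈ S.verts := by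
  simp [sUnion]

lemma le_sUnion (hS : S ∈ 𝒮) : S ≤ sUnion 𝒮 :=
  ⟨Set.subset_biUnion_of_mem (u := fun S => S.verts) hS,
    Set.subset_biUnion_of_mem (u := fun S => S.edges) hS⟩

lemma sUnion_mono (h : 𝒮 ⊆ 𝒯) : sUnion 𝒮 ≤ sUnion 𝒯 :=
  ⟨Set.biUnion_subset_biUnion_left h, Set.biUnion_subset_biUnion_left h⟩

lemma le_top : S ≤ top G := ⟨Set.subset_univ _, Set.subset_univ _⟩

lemma delete_le : S.delete A ≤ S := ⟨Set.sdiff_subset, fun _ he => he.1⟩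

lemma delete_mono (h : S ≤ T) : S.delete A ≤ T.delete A :=
  ⟨Set.sdiff_subset_sdiff_left h.1, fun _ he => ⟨h.2 he.1, he.2⟩⟩

lemma le_delete (h : S ≤ T) (hA : Disjoint S.verts A) : S ≤ T.delete A :=
  ⟨fun _ hx => ⟨h.1 hx, hA.notMem_of_mem_left hx⟩,
    fun e he => ⟨h.2 he, fun v hv => hA.notMem_of_mem_left (S.closed e he v hv)⟩⟩

variable {u v w : G.V}

def AdjIn (S : G.Subgraph) (x y : G.V) : Prop := ∃ e ∈ S.edges, G.ends e = s(x, y)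

instance : Std.Symm S.AdjIn :=
  ⟨fun _ _ ⟨e, he, hxy⟩ => ⟨e, he, hxy.trans Sym2.eq_swap⟩⟩

lemma AdjIn.mem_left {x y : G.V} (h : S.AdjIn x y) : x ∈ S.verts := by
  obtain ⟨e, he, hxy⟩ := h
  exact S.closed e he x (hxy ▸ Sym2.mem_mk_left _ _)

lemma AdjIn.mem_right {x y : G.V} (h : S.AdjIn x y) : y ∈ S.verts :=
  (Std.Symm.symm _ _ h).mem_left

lemma reflTransGen_adjIn_of_walk : ∀ {u v : G.V} (p : G.Walk u v),
    (∀ e ∈ p.edgeList, e ∈ S.edges) → Relation.ReflTransGen S.AdjIn u v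
  | _, _, .nil _, _ => .refl
  | _, _, .cons e he p, hE =>
      .head ⟨e, hE e List.mem_cons_self, he⟩
        (reflTransGen_adjIn_of_walk p fun f hf => hE f (List.mem_cons_of_mem _ hf))

lemma reach_iff_reflTransGen :
    S.Reach u v ↔ u ∈ S.verts ∧ Relation.ReflTransGen S.AdjIn u v := by
  refine ⟨fun ⟨p, hV, hE⟩ =>
    ⟨hV u p.start_mem_support, reflTransGen_adjIn_of_walk p hE⟩, ?_⟩
  rintro ⟨hu, huv⟩
  induction huv using Relation.ReflTransGen.head_induction_on with
  | refl => exact ⟨.nil _, by simpa [Walk.support] using hu, by simp [Walk.edgeList]⟩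
  | head hxy _ ih =>
    obtain ⟨p, hV, hE⟩ := ih hxy.mem_right
    obtain ⟨e, he, hxy⟩ := hxy
    refine ⟨.cons e hxy p, fun x hx => ?_, fun f hf => ?_⟩
    · rcases List.mem_cons.mp hx with rfl | hx
      exacts [hu, hV x hx]
    · rcases List.mem_cons.mp hf with rfl | hf
      exacts [he, hE f hf]

lemma reach_refl (hu : u ∈ S.verts) : S.Reach u u :=
  reach_iff_reflTransGen.mpr ⟨hu, .refl⟩

lemma reach_of_ends {e : G.E} (he : e ∈ S.edges) (huv : G.ends e = s(u, v)) : S.Reach u v :=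
  reach_iff_reflTransGen.mpr ⟨AdjIn.mem_left ⟨e, he, huv⟩, .single ⟨e, he, huv⟩⟩

lemma Reach.mem_right (h : S.Reach u v) : v ∈ S.verts := by
  obtain ⟨p, hV, -⟩ := h
  exact hV v p.end_mem_support

lemma Reach.symm (h : S.Reach u v) : S.Reach v u :=
  reach_iff_reflTransGen.mpr ⟨h.mem_right,
    Relation.ReflTransGen.stdSymm.symm _ _ (reach_iff_reflTransGen.mp h).2⟩

lemma Reach.trans (h₁ : S.Reach u v) (h₂ : S.Reach v w) : S.Reach u w := by
  obtain ⟨hu, huv⟩ := reach_iff_reflTransGen.mp h₁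
  exact reach_iff_reflTransGen.mpr ⟨hu, huv.trans (reach_iff_reflTransGen.mp h₂).2⟩

lemma Reach.mono (hST : S ≤ T) (h : S.Reach u v) : T.Reach u v := by
  obtain ⟨p, hV, hE⟩ := h
  exact ⟨p, fun x hx => hST.1 (hV x hx), fun f hf => hST.2 (hE f hf)⟩

lemma reach_delete_of_walk (p : G.Walk u v) (hV : ∀ x ∈ p.support, x ∈ S.verts ∧ x ∉ A)
    (hE : ∀ f ∈ p.edgeList, f ∈ S.edges) : (S.delete A).Reach u v :=
  ⟨p, hV, fun f hf =>
    ⟨hE f hf, fun x hx => (hV x (p.mem_support_of_mem_edgeList f x hf hx)).2⟩⟩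

lemma reach_delete_of_ends {e : G.E} (he : e ∈ S.edges) (huv : G.ends e = s(u, v))
    (hu : u ∉ A) (hv : v ∉ A) : (S.delete A).Reach u v :=
  reach_of_ends ⟨he, huv ▸ Sym2.forall_mem_pair.mpr ⟨hu, hv⟩⟩ huv

lemma reach_induce_of_ends {e : G.E} (huv : G.ends e = s(u, v)) (hu : u ∈ A) (hv : v ∈ A) :
    (G.induce A).Reach u v :=
  reach_of_ends
    (show ∀ w ∈ G.ends e, w ∈ A from huv ▸ Sym2.forall_mem_pair.mpr ⟨hu, hv⟩) huv

lemma Connected.of_forall_reach (hT : T.Connected) (hTS : T ≤ S)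
    (hreach : ∀ x ∈ S.verts, ∃ y ∈ T.verts, S.Reach x y) : S.Connected := by
  refine ⟨hT.1.mono hTS.1, fun x hx x' hx' => ?_⟩
  obtain ⟨y, hy, hxy⟩ := hreach x hx
  obtain ⟨y', hy', hxy'⟩ := hreach x' hx'
  exact hxy.trans (((hT.2 y hy y' hy').mono hTS).trans hxy'.symm)

end Subgraph

end MGraph

namespace MGraph.Emb

variable {H G : MGraph} (φ : H.Emb G)

lemma vmap_mem_ends_emap {e : H.E} {v : H.V} :
    φ.vmap v ∈ G.ends (φ.emap e) ↔ v ∈ H.ends e := by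
  rw [φ.ends_map, Sym2.mem_map]
  exact ⟨fun ⟨_, ha, hav⟩ => φ.vmap_inj hav ▸ ha, fun hv => ⟨v, hv, rfl⟩⟩

lemma mem_range_vmap_of_mem_ends {e : H.E} {w : G.V} (hw : w ∈ G.ends (φ.emap e)) :
    w ∈ Set.range φ.vmap := by
  rw [φ.ends_map, Sym2.mem_map] at hw
  obtain ⟨v, -, rfl⟩ := hw
  exact ⟨v, rfl⟩

lemma notMem_range_vpos {Δ : Drawing G} {e : H.E} {x : ℝ × ℝ} (hxe : x ∈ Δ.arc (φ.emap e))
    (hx : x ∉ Set.range (Δ.vpos ∘ φ.vmap)) : x ∉ Set.range Δ.vpos := by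
  rintro ⟨w, rfl⟩
  obtain ⟨v, rfl⟩ := φ.mem_range_vmap_of_mem_ends (Δ.vertex_on_arc _ _ hxe)
  exact hx ⟨v, rfl⟩

def comapDrawing (Δ : Drawing G) : Drawing H where
  vpos := Δ.vpos ∘ φ.vmap
  par e := Δ.par (φ.emap e)
  par_cont e := Δ.par_cont _
  par_inj e := Δ.par_inj _
  ends_match e := by
    obtain ⟨v, w, hvw, h0, h1⟩ := Δ.ends_match (φ.emap e)
    induction hab : H.ends e using Sym2.ind with
    | _ a b =>
      rw [φ.ends_map, hab, Sym2.map_mk] at hvw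
      rcases Sym2.eq_iff.mp hvw with ⟨rfl, rfl⟩ | ⟨rfl, rfl⟩
      · exact ⟨a, b, rfl, h0, h1⟩
      · exact ⟨b, a, Sym2.eq_swap, h0, h1⟩
  vpos_inj := Δ.vpos_inj.comp φ.vmap_inj
  arcs_inter e f hef := Δ.arcs_inter _ _ (φ.emap_inj.ne hef)
  vertex_on_arc e v hv := φ.vmap_mem_ends_emap.mp (Δ.vertex_on_arc _ _ hv)
  at_most_two x hx e₁ e₂ e₃ h₁ h₂ h₃ := by
    rcases Δ.at_most_two x (φ.notMem_range_vpos h₁ hx) _ _ _ h₁ h₂ h₃ with h | h | h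
    exacts [.inl (φ.emap_inj h), .inr (.inl (φ.emap_inj h)), .inr (.inr (φ.emap_inj h))]

lemma crossings_comapDrawing_subset (Δ : Drawing G) :
    (φ.comapDrawing Δ).crossings ⊆ Δ.crossings :=
  fun _ ⟨hx, e, f, hef, hxe, hxf⟩ =>
    ⟨φ.notMem_range_vpos hxe hx, φ.emap e, φ.emap f, φ.emap_inj.ne hef, hxe, hxf⟩

end MGraph.Emb

lemma MGraph.IsPlanar.of_emb {H G : MGraph} (hG : G.IsPlanar) (φ : H.Emb G) : H.IsPlanar := by
  obtain ⟨Δ, hΔ⟩ := hG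
  exact ⟨φ.comapDrawing Δ,
    Set.subset_empty_iff.mp (hΔ ▸ φ.crossings_comapDrawing_subset Δ)⟩

namespace MGraph.Subgraph

variable {G : MGraph} {S T : G.Subgraph}

def embOfLE (hST : S ≤ T) : S.toGraph.Emb T.toGraph where
  vmap v := ⟨v.1, hST.1 v.2⟩
  emap e := ⟨e.1, hST.2 e.2⟩
  vmap_inj _ _ h := Subtype.ext (Subtype.mk.inj h)
  emap_inj _ _ h := Subtype.ext (Subtype.mk.inj h)
  ends_map e := by
    induction hvw : G.ends e.1 using Sym2.ind with
    | _ v w =>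
      have hv : v ∈ S.verts := S.closed e.1 e.2 v (hvw ▸ Sym2.mem_mk_left v w)
      have hw : w ∈ S.verts := S.closed e.1 e.2 w (hvw ▸ Sym2.mem_mk_right v w)
      rw [toGraph_ends e hvw hv hw]
      exact toGraph_ends (S := T) _ hvw (hST.1 hv) (hST.1 hw)

lemma isPlanar_of_le (hST : S ≤ T) (hT : T.toGraph.IsPlanar) : S.toGraph.IsPlanar :=
  hT.of_emb (embOfLE hST)

end MGraph.Subgraph

namespace MGraph

variable {G : MGraph} {H C : G.Subgraph} {A : Set G.V} {u : G.V}

lemma reach_delete_attachComp (hu : u ∉ H.verts) (hA : A ⊆ H.verts) {v : G.V}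
    (hv : (G.deleteVerts H.verts).Reach u v) : ((G.attachComp H u).delete A).Reach u v := by
  obtain ⟨-, huv⟩ := Subgraph.reach_iff_reflTransGen.mp hv
  clear hv
  induction huv with
  | refl =>
    exact Subgraph.reach_refl ⟨.inl (Subgraph.reach_refl hu), fun huA => hu (hA huA)⟩
  | tail hux hxy ih =>
    obtain ⟨e, heD, hxy'⟩ := hxy
    have hreach : ∀ y ∈ G.ends e, (G.deleteVerts H.verts).Reach u y :=
      hxy' ▸ Sym2.forall_mem_pair.mpr ⟨Subgraph.reach_iff_reflTransGen.mpr ⟨hu, hux⟩,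
        Subgraph.reach_iff_reflTransGen.mpr ⟨hu, hux.tail ⟨e, heD, hxy'⟩⟩⟩
    exact ih.trans
      (Subgraph.reach_of_ends ⟨.inl ⟨heD, hreach⟩, fun y hy hyA => heD y hy (hA hyA)⟩ hxy')

lemma reach_delete_attachComp_of_mem (hu : u ∉ H.verts) (hA : A ⊆ H.verts) {x : G.V}
    (hx : x ∈ (G.attachComp H u).verts) (hxA : x ∉ A) :
    ((G.attachComp H u).delete A).Reach u x := by
  rcases hx with hx | ⟨hxH, e, w, hwx, hw⟩
  · exact reach_delete_attachComp hu hA hx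
  · have hwA : w ∉ A := fun hwA => hw.mem_right (hA hwA)
    exact (reach_delete_attachComp hu hA hw).trans
      (Subgraph.reach_delete_of_ends (.inr ⟨w, x, hwx, hw, hxH⟩) hwx hwA hxA)

lemma IsHComp.reach_delete (hC : G.IsHComp H C) (hA : A ⊆ H.verts) {x y : G.V}
    (hx : x ∈ C.verts) (hxA : x ∉ A) (hy : y ∈ C.verts) (hyA : y ∉ A) :
    (C.delete A).Reach x y := by
  rcases hC with ⟨u, hu, rfl⟩ | ⟨e, -, -, rfl⟩
  · exact (reach_delete_attachComp_of_mem hu hA hx hxA).symm.trans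
      (reach_delete_attachComp_of_mem hu hA hy hyA)
  · by_cases hxy : x = y
    · exact hxy ▸ Subgraph.reach_refl ⟨hx, hxA⟩
    · exact Subgraph.reach_delete_of_ends rfl ((Sym2.mem_and_mem_iff hxy).mp ⟨hx, hy⟩)
        hxA hyA

end MGraph

namespace TopEmb

open MGraph

variable {H G : MGraph} (h : TopEmb H G) {S T : H.Subgraph}

lemma vmap_mem_imageOf {a : H.V} (ha : a ∈ S.verts) : h.vmap a ∈ (h.imageOf S).verts :=
  .inl ⟨a, ha, rfl⟩

lemma pVerts_subset_imageOf {e : H.E} (he : e ∈ S.edges) :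
    h.pVerts e ⊆ (h.imageOf S).verts :=
  fun _ hx => .inr (Set.mem_biUnion he hx)

lemma pEdges_subset_imageOf {e : H.E} (he : e ∈ S.edges) :
    h.pEdges e ⊆ (h.imageOf S).edges :=
  fun _ hf => Set.mem_biUnion he hf

lemma imageOf_mono (hST : S ≤ T) : h.imageOf S ≤ h.imageOf T :=
  ⟨Set.union_subset_union (Set.image_mono hST.1) (Set.biUnion_subset_biUnion_left hST.2),
    Set.biUnion_subset_biUnion_left hST.2⟩

lemma mem_ends_of_vmap_mem_pVerts {e : H.E} {c : H.V} (hc : h.vmap c ∈ h.pVerts e) :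
    c ∈ H.ends e := by
  obtain ⟨_, _, w, -, -, hV, -, havoid⟩ := h.is_path e
  rw [hV] at hc
  exact not_not.mp fun hce => havoid c hce hc

lemma vmap_mem_imageOf_iff {a : H.V} : h.vmap a ∈ (h.imageOf S).verts ↔ a ∈ S.verts := by
  refine ⟨?_, h.vmap_mem_imageOf⟩
  rintro (⟨c, hc, hca⟩ | ha)
  · exact h.vmap_inj hca ▸ hc
  · obtain ⟨e, he, hae⟩ := Set.mem_iUnion₂.mp ha
    exact S.closed e he a (h.mem_ends_of_vmap_mem_pVerts hae)

lemma exists_eq_vmap_of_mem_pVerts {e : H.E} (heT : e ∉ T.edges) {y : G.V}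
    (hy : y ∈ h.pVerts e) (hyT : y ∈ (h.imageOf T).verts) :
    ∃ c ∈ H.ends e, c ∈ T.verts ∧ y = h.vmap c := by
  rcases hyT with ⟨c, hc, rfl⟩ | hyT
  · exact ⟨c, h.mem_ends_of_vmap_mem_pVerts hy, hc, rfl⟩
  · obtain ⟨f, hfT, hyf⟩ := Set.mem_iUnion₂.mp hyT
    obtain ⟨c, hce, hcf, rfl⟩ := h.int_disjoint e f (fun hef => heT (hef ▸ hfT)) y ⟨hy, hyf⟩
    exact ⟨c, hce, T.closed f hfT c hcf, rfl⟩

lemma disjoint_imageOf_verts (hST : Disjoint S.verts T.verts) :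
    Disjoint (h.imageOf S).verts (h.imageOf T).verts := by
  refine Set.disjoint_left.mpr fun y hyS hyT => ?_
  rcases hyS with ⟨a, ha, rfl⟩ | hyS
  · exact hST.notMem_of_mem_left ha (h.vmap_mem_imageOf_iff.mp hyT)
  · obtain ⟨e, heS, hye⟩ := Set.mem_iUnion₂.mp hyS
    by_cases heT : e ∈ T.edges
    · have hc := Sym2.out_fst_mem (H.ends e)
      exact hST.notMem_of_mem_left (S.closed e heS _ hc) (T.closed e heT _ hc)
    · obtain ⟨c, hce, hcT, -⟩ := h.exists_eq_vmap_of_mem_pVerts heT hye hyT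
      exact hST.notMem_of_mem_left (S.closed e heS c hce) hcT

lemma reach_imageOf_of_ends {e : H.E} (he : e ∈ S.edges) {a b : H.V}
    (hab : H.ends e = s(a, b)) : (h.imageOf S).Reach (h.vmap a) (h.vmap b) := by
  obtain ⟨a', b', w, hab', -, hV, hE, -⟩ := h.is_path e
  have hw : (h.imageOf S).Reach (h.vmap a') (h.vmap b') :=
    ⟨w, fun x hx => h.pVerts_subset_imageOf he (hV ▸ hx),
      fun f hf => h.pEdges_subset_imageOf he (hE ▸ hf)⟩
  rcases Sym2.eq_iff.mp (hab.symm.trans hab') with ⟨rfl, rfl⟩ | ⟨rfl, rfl⟩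
  exacts [hw, hw.symm]

lemma reach_imageOf {a b : H.V} (hab : S.Reach a b) :
    (h.imageOf S).Reach (h.vmap a) (h.vmap b) := by
  obtain ⟨ha, hab'⟩ := Subgraph.reach_iff_reflTransGen.mp hab
  clear hab
  induction hab' with
  | refl => exact Subgraph.reach_refl (h.vmap_mem_imageOf ha)
  | tail _ hbc ih =>
    obtain ⟨e, he, hbc⟩ := hbc
    exact ih.trans (h.reach_imageOf_of_ends he hbc)

lemma exists_reach_vmap {x : G.V} (hx : x ∈ (h.imageOf S).verts) :
    ∃ a ∈ S.verts, (h.imageOf S).Reach x (h.vmap a) := by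
  rcases hx with ⟨a, ha, rfl⟩ | hx
  · exact ⟨a, ha, Subgraph.reach_refl (h.vmap_mem_imageOf ha)⟩
  · obtain ⟨e, he, hxe⟩ := Set.mem_iUnion₂.mp hx
    obtain ⟨a, b, w, hab, hw, hV, hE, -⟩ := h.is_path e
    rw [hV] at hxe
    obtain ⟨w', hV', hE', -⟩ := w.exists_suffix_of_mem_support hw hxe
    refine ⟨b, S.closed e he b (hab ▸ Sym2.mem_mk_right a b), w', fun y hy => ?_,
      fun f hf => ?_⟩
    · exact h.pVerts_subset_imageOf he (hV ▸ hV' hy)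
    · exact h.pEdges_subset_imageOf he (hE ▸ hE' hf)

lemma connected_imageOf (hS : S.Connected) : (h.imageOf S).Connected := by
  obtain ⟨⟨a, ha⟩, hreach⟩ := hS
  refine ⟨⟨h.vmap a, h.vmap_mem_imageOf ha⟩, fun x hx y hy => ?_⟩
  obtain ⟨b, hb, hxb⟩ := h.exists_reach_vmap hx
  obtain ⟨c, hc, hyc⟩ := h.exists_reach_vmap hy
  exact hxb.trans ((h.reach_imageOf (hreach b hb c hc)).trans hyc.symm)

/-- The path of `e` meets `h(T)` at most in the image of the end of `e` other than `b`, and the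
part of that path between `x` and `h(b)` avoids this image. -/
lemma reach_delete_of_mem_pVerts {e : H.E} (heS : e ∈ S.edges) (heT : e ∉ T.edges)
    {b : H.V} (hb : b ∈ H.ends e) (hbT : b ∉ T.verts) {x : G.V} (hx : x ∈ h.pVerts e)
    (hxT : x ∉ (h.imageOf T).verts) :
    ((h.imageOf S).delete (h.imageOf T).verts).Reach x (h.vmap b) := by
  obtain ⟨a₀, b₀, w, hends, hw, hV, hE, -⟩ := h.is_path e
  rw [hV] at hx
  have reach_of_subwalk : ∀ {p q : G.V} (w' : G.Walk p q), w'.support ⊆ w.support →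
      w'.edgeList ⊆ w.edgeList →
      (∀ c ∈ H.ends e, c ≠ b → h.vmap c ∈ w'.support → x = h.vmap c) →
      ((h.imageOf S).delete (h.imageOf T).verts).Reach p q := by
    intro p q w' hV' hE' havoid
    refine Subgraph.reach_delete_of_walk w'
      (fun y hy => ⟨h.pVerts_subset_imageOf heS (hV ▸ hV' hy), fun hyT => ?_⟩)
      (fun f hf => h.pEdges_subset_imageOf heS (hE ▸ hE' hf))
    obtain ⟨c, hce, hcT, rfl⟩ := h.exists_eq_vmap_of_mem_pVerts heT (hV ▸ hV' hy) hyT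
    exact hxT (havoid c hce (fun hcb => hbT (hcb ▸ hcT)) hy ▸ hyT)
  have hother : ∀ c ∈ H.ends e, c ≠ b → c = a₀ ∨ c = b₀ := fun c hc _ =>
    Sym2.mem_iff.mp (hends ▸ hc)
  rcases Sym2.mem_iff.mp (hends ▸ hb) with rfl | rfl
  · obtain ⟨w', hV', hE', hv⟩ := w.exists_prefix_of_mem_support hw hx
    refine (reach_of_subwalk w' hV' hE' fun c hc hcb hcw => ?_).symm
    rcases hother c hc hcb with rfl | rfl
    exacts [absurd rfl hcb, hv hcw]
  · obtain ⟨w', hV', hE', hu⟩ := w.exists_suffix_of_mem_support hw hx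
    refine reach_of_subwalk w' hV' hE' fun c hc hcb hcw => ?_
    rcases hother c hc hcb with rfl | rfl
    exacts [hu hcw, absurd rfl hcb]

lemma exists_reach_delete_imageOf
    (hT : ∀ e ∈ S.edges, e ∉ T.edges → ∃ b ∈ H.ends e, b ∉ T.verts)
    {x : G.V} (hxS : x ∈ (h.imageOf S).verts) (hxT : x ∉ (h.imageOf T).verts) :
    ∃ b ∈ S.verts, b ∉ T.verts ∧
      ((h.imageOf S).delete (h.imageOf T).verts).Reach x (h.vmap b) := by
  rcases hxS with ⟨a, ha, rfl⟩ | hx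
  · exact ⟨a, ha, fun haT => hxT (h.vmap_mem_imageOf haT),
      Subgraph.reach_refl ⟨h.vmap_mem_imageOf ha, hxT⟩⟩
  · obtain ⟨e, heS, hxe⟩ := Set.mem_iUnion₂.mp hx
    have heT : e ∉ T.edges := fun heT => hxT (h.pVerts_subset_imageOf heT hxe)
    obtain ⟨b, hbe, hbT⟩ := hT e heS heT
    exact ⟨b, S.closed e heS b hbe, hbT,
      h.reach_delete_of_mem_pVerts heS heT hbe hbT hxe hxT⟩

end TopEmb

section HexGrid

open MGraph

variable {r : ℕ}

lemma hexSubgridLE_reach_cycle (t j : Fin r) (hj : j ≤ t) (a : ZMod (6 * (2 * j.val + 1))) :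
    (hexSubgridLE r t).Reach ⟨j, a⟩ ⟨j, 0⟩ := by
  have : NeZero (6 * (2 * j.val + 1)) := ⟨by omega⟩
  obtain ⟨m, rfl⟩ := ZMod.natCast_zmod_surjective a
  induction m with
  | zero => exact_mod_cast Subgraph.reach_refl hj
  | succ m ih =>
    rw [Nat.cast_succ]
    exact (Subgraph.reach_induce_of_ends (hexGrid_ends_inl r j m) hj hj).symm.trans ih

lemma hexSubgridLE_reach_spoke (t : Fin r) (n : ℕ) (hn : n + 1 ≤ t.val) :
    (hexSubgridLE r t).Reach ⟨⟨n + 1, by have := t.isLt; omega⟩, 1⟩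
      ⟨⟨n, by have := t.isLt; omega⟩, 0⟩ := by
  let i : Fin (r - 1) := ⟨n, by have := t.isLt; omega⟩
  have hends : (hexGrid r).ends (Sum.inr ⟨i, 0⟩) =
      s(⟨⟨n, by have := t.isLt; omega⟩, 0⟩, ⟨⟨n + 1, by have := t.isLt; omega⟩, 1⟩) := by
    simp [spokeOutV, spokeInV, i]
    rfl
  exact (Subgraph.reach_induce_of_ends hends (show n ≤ t.val by omega) hn).symm

lemma hexSubgridLE_reach_center (t : Fin r) (v : HexV r) (hv : v.1 ≤ t) :
    (hexSubgridLE r t).Reach v ⟨⟨0, t.pos⟩, 0⟩ := by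
  obtain ⟨j, a⟩ := v
  refine (hexSubgridLE_reach_cycle t j hv a).trans ?_
  change j ≤ t at hv
  clear a
  obtain ⟨n, hn⟩ := j
  induction n with
  | zero => exact Subgraph.reach_refl hv
  | succ n ih =>
    have hn' : n + 1 ≤ t.val := hv
    exact (hexSubgridLE_reach_cycle t _ hv 1).symm.trans
      ((hexSubgridLE_reach_spoke t n hn').trans (ih (by omega) (show n ≤ t.val by omega)))

lemma hexSubgridLE_connected (t : Fin r) : (hexSubgridLE r t).Connected :=
  ⟨⟨⟨⟨0, t.pos⟩, 0⟩, Nat.zero_le t.val⟩, fun u hu v hv =>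
    (hexSubgridLE_reach_center t u hu).trans (hexSubgridLE_reach_center t v hv).symm⟩

lemma hexSubgridLT_eq_hexSubgridLE (i : Fin r) (hi : 1 ≤ i.val) :
    hexSubgridLT r i = hexSubgridLE r ⟨i.val - 1, by have := i.isLt; omega⟩ := by
  unfold hexSubgridLT hexSubgridLE
  congr 1
  ext v
  simp only [Set.mem_ofPred_eq, Fin.lt_def, Fin.le_def]
  omega

lemma hexSubgridLT_connected (i : Fin r) (hi : 1 ≤ i.val) : (hexSubgridLT r i).Connected :=
  hexSubgridLT_eq_hexSubgridLE i hi ▸ hexSubgridLE_connected _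

lemma hexSubgridLT_le (i : Fin r) : hexSubgridLT r i ≤ hexSubgridLE r i :=
  ⟨fun _ hv => show _ ≤ i from le_of_lt hv,
    fun _ he v hv => show _ ≤ i from le_of_lt (he v hv)⟩

lemma disjoint_hexSubgridLT_principalCycle (i : Fin r) :
    Disjoint (hexSubgridLT r i).verts (principalCycle r i).verts :=
  Set.disjoint_left.mpr fun _ hlt heq => ne_of_lt hlt heq

lemma exists_end_notMem_principalCycle {i : Fin r} {e : (hexGrid r).E}
    (he : e ∉ (principalCycle r i).edges) :
    ∃ b ∈ (hexGrid r).ends e, b ∉ (principalCycle r i).verts := by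
  rcases e with ⟨j, m⟩ | ⟨j, k⟩
  · refine ⟨⟨j, m⟩, Sym2.mem_mk_left _ _, fun hj => he ?_⟩
    obtain rfl : j = i := hj
    exact ⟨m, rfl⟩
  · by_cases hj : (spokeOutV r j k.val).1 = i
    · refine ⟨spokeInV r j k.val, Sym2.mem_mk_right _ _, fun hin => ?_⟩
      have h₁ := congrArg Fin.val hj
      have h₂ := congrArg Fin.val (show (spokeInV r j k.val).1 = i from hin)
      simp only [spokeOutV, spokeInV] at h₁ h₂
      omega
    · exact ⟨_, Sym2.mem_mk_left _ _, hj⟩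

end HexGrid

namespace TopEmb

open MGraph

variable {G : MGraph} {r : ℕ} (h : TopEmb (hexGrid r) G) (i : Fin r)

lemma connected_K : (h.K i).Connected := by
  refine Subgraph.Connected.of_forall_reach (h.connected_imageOf (hexSubgridLE_connected i))
    Subgraph.le_union_left fun x hx => ?_
  rcases hx with hx | hx
  · exact ⟨x, hx, Subgraph.reach_refl (Subgraph.le_union_left.1 hx)⟩
  · obtain ⟨C, hCK, hxC⟩ := Subgraph.mem_sUnion_verts.mp hx
    have hCK' : C ≤ h.K i := (Subgraph.le_sUnion hCK).trans Subgraph.le_union_right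
    obtain ⟨hC, y, hyC, hy⟩ := hCK
    refine ⟨y, (h.imageOf_mono (hexSubgridLT_le i)).1 hy, ?_⟩
    exact (hC.1.reach_delete (Set.empty_subset _) hxC (Set.notMem_empty x) hyC
      (Set.notMem_empty y)).mono (Subgraph.delete_le.trans hCK')

lemma connected_Iset (hi : 1 ≤ i.val) : (h.Iset i).Connected := by
  have hdisj := h.disjoint_imageOf_verts (disjoint_hexSubgridLT_principalCycle i)
  have hcore : h.imageOf (hexSubgridLT r i) ≤ h.Iset i :=
    Subgraph.le_delete ((h.imageOf_mono (hexSubgridLT_le i)).trans Subgraph.le_union_left) hdisj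
  refine Subgraph.Connected.of_forall_reach (h.connected_imageOf (hexSubgridLT_connected i hi))
    hcore fun x hx => ?_
  obtain ⟨hx | hx, hxC⟩ := hx
  · obtain ⟨b, hb, hbC, hxb⟩ := h.exists_reach_delete_imageOf
      (fun _ _ he => exists_end_notMem_principalCycle he) hx hxC
    exact ⟨h.vmap b, h.vmap_mem_imageOf (lt_of_le_of_ne hb hbC),
      hxb.mono (Subgraph.delete_mono Subgraph.le_union_left)⟩
  · obtain ⟨C, hCK, hxC'⟩ := Subgraph.mem_sUnion_verts.mp hx
    have hCK' : C ≤ h.K i := (Subgraph.le_sUnion hCK).trans Subgraph.le_union_right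
    obtain ⟨hC, y, hyC, hy⟩ := hCK
    exact ⟨y, hy, (hC.1.reach_delete (h.imageOf_mono Subgraph.le_top).1 hxC' hxC hyC
      (hdisj.notMem_of_mem_left hy)).mono (Subgraph.delete_mono hCK')⟩

lemma isPlanar_K (hflat : h.Flat) : (h.K i).toGraph.IsPlanar :=
  Subgraph.isPlanar_of_le (Subgraph.union_mono (h.imageOf_mono Subgraph.le_top)
    (Subgraph.sUnion_mono fun _ hC => hC.1)) hflat

lemma isPlanar_Iset (hflat : h.Flat) : (h.Iset i).toGraph.IsPlanar :=
  Subgraph.isPlanar_of_le Subgraph.delete_le (h.isPlanar_K i hflat)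

end TopEmb

/-- Principal cycles are 0-indexed: `i : Fin r` with `1 ≤ i.val` is the paper's index
`i.val + 1 ∈ {2, …, r}`. -/
theorem K_and_I_connected_planar_general (r : ℕ) (G : MGraph)
    (h : TopEmb (hexGrid r) G) (hflat : h.Flat) (i : Fin r) (hi : 1 ≤ i.val) :
    (h.K i).Connected ∧ (h.K i).toGraph.IsPlanar ∧
    (h.Iset i).Connected ∧ (h.Iset i).toGraph.IsPlanar :=
  ⟨h.connected_K i, h.isPlanar_K i hflat, h.connected_Iset i hi, h.isPlanar_Iset i hflat⟩

/-- For a flat topological embedding `h : H_r → G` and `2 ≤ i ≤ r`, both `K_i` and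
`I_i = K_i ∖ h(C_i)` are connected planar graphs.  (Principal cycles are 0-indexed
here: the index `i : Fin r` with `1 ≤ i.val` corresponds to the paper's index
`i.val + 1 ∈ {2, …, r}`.) -/
theorem K_and_I_connected_planar (r : ℕ) (hr : 2 ≤ r) (G : MGraph)
    (h : TopEmb (hexGrid r) G) (hflat : h.Flat) (i : Fin r) (hi : 1 ≤ i.val) :
    (h.K i).Connected ∧ (h.K i).toGraph.IsPlanar ∧
    (h.Iset i).Connected ∧ (h.Iset i).toGraph.IsPlanar :=
  K_and_I_connected_planar_general r G h hflat i hi
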